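/- arXiv:1909.11542 — 4 statements merged into one kernel-verified Lean document; each statement's English description precedes it below -/
import Mathlib

section
/- For all real numbers t and u, and for all sequences (ε_n) of positive reals with ε_n → 0 and (B_n) of reals with B_n·ε_n → +∞, the sequence 1/(1 + exp(−B_n(t − u + ε_n))) converges to 1 if t ≥ u, and converges to 0 if t < u. -/
/-! The value is `Real.sigmoid (B n * (t - u + ε n))`. If `t ≥ u` the argument is at least
`B n * ε n → ∞`; if `t < u` then `B n → ∞` while `t - u + ε n → t - u < 0`, so the argument tends
to `-∞`. The limits `1` and `0` are those of the sigmoid at `±∞`. -/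

open Filter Topology

section

variable {ι : Type*} {l : Filter ι} {ε B : ι → ℝ}

lemma eventually_pos_of_tendsto_mul_atTop (hε : ∀ i, 0 < ε i)
    (hBε : Tendsto (fun i => B i * ε i) l atTop) : ∀ᶠ i in l, 0 < B i := by
  filter_upwards [hBε.eventually_gt_atTop 0] with i hi
  exact pos_of_mul_pos_left hi (hε i).le

lemma tendsto_atTop_of_tendsto_mul_atTop_of_tendsto_zero (hε : ∀ i, 0 < ε i)
    (hε₀ : Tendsto ε l (𝓝 0)) (hBε : Tendsto (fun i => B i * ε i) l atTop) :
    Tendsto B l atTop := by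
  refine tendsto_atTop_mono' _ ?_ hBε
  filter_upwards [eventually_pos_of_tendsto_mul_atTop hε hBε,
    hε₀.eventually (gt_mem_nhds one_pos)] with i hB hε₁
  exact mul_le_of_le_one_right hB.le hε₁.le

lemma tendsto_mul_add_atTop_of_nonneg {c : ℝ} (hc : 0 ≤ c) (hε : ∀ i, 0 < ε i)
    (hBε : Tendsto (fun i => B i * ε i) l atTop) :
    Tendsto (fun i => B i * (c + ε i)) l atTop := by
  refine tendsto_atTop_mono' _ ?_ hBε
  filter_upwards [eventually_pos_of_tendsto_mul_atTop hε hBε] with i hB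
  nlinarith

lemma tendsto_mul_add_atBot_of_neg {c : ℝ} (hc : c < 0) (hε : ∀ i, 0 < ε i)
    (hε₀ : Tendsto ε l (𝓝 0)) (hBε : Tendsto (fun i => B i * ε i) l atTop) :
    Tendsto (fun i => B i * (c + ε i)) l atBot := by
  have hcε : Tendsto (fun i => c + ε i) l (𝓝 c) := by
    simpa using tendsto_const_nhds.add hε₀
  exact (tendsto_atTop_of_tendsto_mul_atTop_of_tendsto_zero hε hε₀ hBε).atTop_mul_neg hc hcε

end

lemma one_div_one_add_exp_neg_mul (b x : ℝ) :
    1 / (1 + Real.exp (-b * x)) = Real.sigmoid (b * x) := by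
  rw [Real.sigmoid_def, one_div, neg_mul]

theorem stmt_1 (t u : ℝ) (ε B : ℕ → ℝ)
    (hε_pos : ∀ n, 0 < ε n)
    (hε_lim : Tendsto ε atTop (𝓝 0))
    (hBε : Tendsto (fun n => B n * ε n) atTop atTop) :
    (t ≥ u → Tendsto (fun n => 1 / (1 + Real.exp (-(B n) * (t - u + ε n)))) atTop (𝓝 1)) ∧
    (t < u → Tendsto (fun n => 1 / (1 + Real.exp (-(B n) * (t - u + ε n)))) atTop (𝓝 0)) := by
  simp only [one_div_one_add_exp_neg_mul]
  constructor
  · intro htu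
    exact Real.tendsto_sigmoid_atTop.comp
      (tendsto_mul_add_atTop_of_nonneg (sub_nonneg.mpr htu) hε_pos hBε)
  · intro htu
    exact Real.tendsto_sigmoid_atBot.comp
      (tendsto_mul_add_atBot_of_neg (sub_neg.mpr htu) hε_pos hε_lim hBε)
end

section
/- Let ⊗ : [0,1] × [0,1] → [0,1] be a continuous function satisfying 1 ⊗ 1 = 1, 0 ⊗ 1 = 0, and 1 ⊗ 0 = 0. Then for all real numbers t and u, and for all sequences (ε_n) of positive reals with ε_n → 0 and (B_n) of reals with B_n·ε_n → +∞, the sequence (1/(1 + e^{−B_n(t−u+ε_n)})) ⊗ (1/(1 + e^{B_n(t−u−ε_n)})) converges to 1 if t = u, and converges to 0 if t ≠ u. -/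
/-! Write `σ x = 1 / (1 + exp x)`. The two arguments are `σ (-B (d + ε))` and `σ (B (d - ε))`
with `d = t - u`. Since `B ε → ∞` and `ε → 0⁺`, also `B → ∞`. For `d = 0` both exponents equal
`-B ε → -∞`, so both arguments tend to `1`; for `d ≠ 0` the factors `d ± ε` tend to `d`, so the
exponents tend to infinities of opposite signs and the arguments to `0` and `1` in some order.
Continuity of `⊗` on the unit square then gives the limits `1 ⊗ 1 = 1` and `0 ⊗ 1 = 1 ⊗ 0 = 0`. -/

open Filter Topology Set

lemma one_div_one_add_exp_mem_Icc (x : ℝ) : 1 / (1 + Real.exp x) ∈ Icc (0 : ℝ) 1 := by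
  have hexp := Real.exp_pos x
  refine ⟨by positivity, ?_⟩
  rw [div_le_one (by linarith)]
  linarith

lemma tendsto_one_div_one_add_exp_atBot :
    Tendsto (fun x => 1 / (1 + Real.exp x)) atBot (𝓝 1) := by
  have h : Tendsto (fun x => 1 / (1 + Real.exp x)) atBot (𝓝 (1 / (1 + 0))) :=
    tendsto_const_nhds.div (tendsto_const_nhds.add Real.tendsto_exp_atBot) (by norm_num)
  simpa using h

lemma tendsto_one_div_one_add_exp_atTop :
    Tendsto (fun x => 1 / (1 + Real.exp x)) atTop (𝓝 0) := by
  simpa [Function.comp_def] using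
    tendsto_inv_atTop_zero.comp (tendsto_atTop_add_const_left _ 1 Real.tendsto_exp_atTop)

lemma tendsto_atTop_of_tendsto_mul_atTop {α : Type*} {l : Filter α} {ε B : α → ℝ}
    (hε_pos : ∀ n, 0 < ε n) (hε_lim : Tendsto ε l (𝓝 0))
    (hBε : Tendsto (fun n => B n * ε n) l atTop) : Tendsto B l atTop := by
  have hε_inv : Tendsto (fun n => (ε n)⁻¹) l atTop :=
    tendsto_inv_nhdsGT_zero.comp (tendsto_nhdsWithin_iff.2 ⟨hε_lim, .of_forall hε_pos⟩)
  refine (hBε.atTop_mul_atTop₀ hε_inv).congr fun n => ?_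
  rw [mul_assoc, mul_inv_cancel₀ (hε_pos n).ne', mul_one]

lemma ContinuousOn.tendsto_apply₂ {α X Y Z : Type*} [TopologicalSpace X] [TopologicalSpace Y]
    [TopologicalSpace Z] {l : Filter α} {F : X → Y → Z} {s : Set (X × Y)}
    (hF : ContinuousOn (fun p : X × Y => F p.1 p.2) s) {x : X} {y : Y} (hxy : (x, y) ∈ s)
    {f : α → X} {g : α → Y} (hf : Tendsto f l (𝓝 x)) (hg : Tendsto g l (𝓝 y))
    (hfg : ∀ᶠ n in l, (f n, g n) ∈ s) :
    Tendsto (fun n => F (f n) (g n)) l (𝓝 (F x y)) :=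
  (hF (x, y) hxy).tendsto.comp (tendsto_nhdsWithin_iff.2 ⟨hf.prodMk_nhds hg, hfg⟩)

lemma tendsto_apply_one_div_one_add_exp {α : Type*} {l : Filter α} {F : ℝ → ℝ → ℝ}
    (hF : ContinuousOn (fun p : ℝ × ℝ => F p.1 p.2) (Icc (0 : ℝ) 1 ×ˢ Icc (0 : ℝ) 1))
    {a b : α → ℝ} {x y : ℝ} (hx : x ∈ Icc (0 : ℝ) 1) (hy : y ∈ Icc (0 : ℝ) 1)
    (ha : Tendsto (fun n => 1 / (1 + Real.exp (a n))) l (𝓝 x))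
    (hb : Tendsto (fun n => 1 / (1 + Real.exp (b n))) l (𝓝 y)) :
    Tendsto (fun n => F (1 / (1 + Real.exp (a n))) (1 / (1 + Real.exp (b n)))) l
      (𝓝 (F x y)) :=
  hF.tendsto_apply₂ ⟨hx, hy⟩ ha hb
    (.of_forall fun _ => ⟨one_div_one_add_exp_mem_Icc _, one_div_one_add_exp_mem_Icc _⟩)

theorem stmt_3_general (otimes : ℝ → ℝ → ℝ)
    (hcont : ContinuousOn (fun p : ℝ × ℝ => otimes p.1 p.2)
      (Set.Icc (0:ℝ) 1 ×ˢ Set.Icc (0:ℝ) 1))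
    (h11 : otimes 1 1 = 1) (h01 : otimes 0 1 = 0) (h10 : otimes 1 0 = 0)
    (t u : ℝ) (ε B : ℕ → ℝ)
    (hε_pos : ∀ n, 0 < ε n)
    (hε_lim : Tendsto ε atTop (𝓝 0))
    (hBε : Tendsto (fun n => B n * ε n) atTop atTop) :
    (t = u → Tendsto (fun n => otimes (1 / (1 + Real.exp (-(B n) * (t - u + ε n))))
      (1 / (1 + Real.exp (B n * (t - u - ε n))))) atTop (𝓝 1)) ∧
    (t ≠ u → Tendsto (fun n => otimes (1 / (1 + Real.exp (-(B n) * (t - u + ε n))))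
      (1 / (1 + Real.exp (B n * (t - u - ε n))))) atTop (𝓝 0)) := by
  have h0 : (0 : ℝ) ∈ Icc (0 : ℝ) 1 := left_mem_Icc.2 zero_le_one
  have h1 : (1 : ℝ) ∈ Icc (0 : ℝ) 1 := right_mem_Icc.2 zero_le_one
  have hB := tendsto_atTop_of_tendsto_mul_atTop hε_pos hε_lim hBε
  have hσ_bot := tendsto_one_div_one_add_exp_atBot
  have hσ_top := tendsto_one_div_one_add_exp_atTop
  simp only [neg_mul]
  refine ⟨fun htu => ?_, fun htu => ?_⟩
  · subst htu
    have hσ := hσ_bot.comp (tendsto_neg_atTop_atBot.comp hBε)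
    simp only [sub_self, zero_add, zero_sub, mul_neg]
    simpa only [h11, Function.comp_def] using tendsto_apply_one_div_one_add_exp hcont h1 h1 hσ hσ
  have hplus := hε_lim.const_add (t - u)
  have hminus := hε_lim.const_sub (t - u)
  rw [add_zero] at hplus
  rw [sub_zero] at hminus
  rcases htu.lt_or_gt with hlt | hgt
  · have hd : t - u < 0 := sub_neg.2 hlt
    simpa only [h01, Function.comp_def] using tendsto_apply_one_div_one_add_exp hcont h0 h1
      (hσ_top.comp (tendsto_neg_atBot_atTop.comp (hB.atTop_mul_neg hd hplus)))
      (hσ_bot.comp (hB.atTop_mul_neg hd hminus))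
  · have hd : 0 < t - u := sub_pos.2 hgt
    simpa only [h10, Function.comp_def] using tendsto_apply_one_div_one_add_exp hcont h1 h0
      (hσ_bot.comp (tendsto_neg_atTop_atBot.comp (hB.atTop_mul_pos hd hplus)))
      (hσ_top.comp (hB.atTop_mul_pos hd hminus))

theorem stmt_3 (otimes : ℝ → ℝ → ℝ)
    (hmaps : ∀ x ∈ Set.Icc (0:ℝ) 1, ∀ y ∈ Set.Icc (0:ℝ) 1, otimes x y ∈ Set.Icc (0:ℝ) 1)
    (hcont : ContinuousOn (fun p : ℝ × ℝ => otimes p.1 p.2)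
      (Set.Icc (0:ℝ) 1 ×ˢ Set.Icc (0:ℝ) 1))
    (h11 : otimes 1 1 = 1) (h01 : otimes 0 1 = 0) (h10 : otimes 1 0 = 0)
    (t u : ℝ) (ε B : ℕ → ℝ)
    (hε_pos : ∀ n, 0 < ε n)
    (hε_lim : Tendsto ε atTop (𝓝 0))
    (hBε : Tendsto (fun n => B n * ε n) atTop atTop) :
    (t = u → Tendsto (fun n => otimes (1 / (1 + Real.exp (-(B n) * (t - u + ε n))))
      (1 / (1 + Real.exp (B n * (t - u - ε n))))) atTop (𝓝 1)) ∧
    (t ≠ u → Tendsto (fun n => otimes (1 / (1 + Real.exp (-(B n) * (t - u + ε n))))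
      (1 / (1 + Real.exp (B n * (t - u - ε n))))) atTop (𝓝 0)) :=
  stmt_3_general otimes hcont h11 h01 h10 t u ε B hε_pos hε_lim hBε
end

section
/- Fix B > 0 and ε > 0 and let f(x) = (1/(1 + e^{−B(x+ε)}))·(1/(1 + e^{B(x−ε)})). Let n, m ≥ 1, let l₁,…,l_n ≥ 1, let t_{ijk} ∈ ℝ for 1 ≤ i ≤ n, 1 ≤ j ≤ l_i, 1 ≤ k ≤ m be data, and let ℒ : ℝ → ℝ be strictly decreasing on [0,1]. Define the loss L(W) = Σ_{k=1}^m ℒ( Π_{i=1}^n f( Σ_{j=1}^{l_i} w_{ij} t_{ijk} ) ) for weights W = (w_{ij}). If W* is a local minimum of L, then Σ_{j=1}^{l_i} w*_{ij} t_{ijk} = 0 for all i and k, and consequently W* is a global minimum of L, i.e., L(W*) ≤ L(W) for all W. -/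
/-- Continuous semantic value of the equality constraint `x = 0` under the
product t-norm, with scaling `B` and offset `ε`. -/
noncomputable def clnEq (B ε x : ℝ) : ℝ :=
  (1 / (1 + Real.exp (-B * (x + ε)))) * (1 / (1 + Real.exp (B * (x - ε))))



lemma clnEq_eq (B ε x : ℝ) :
    clnEq B ε x =
      1 / (1 + Real.exp (-(2*B*ε)) + 2 * Real.exp (-(B*ε)) * Real.cosh (B*x)) := by
  unfold clnEq
  rw [div_mul_div_comm, one_mul]
  congr 1
  rw [Real.cosh_eq]
  have h1 : Real.exp (-B*(x+ε)) * Real.exp (B*(x-ε)) = Real.exp (-(2*B*ε)) := by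
    rw [← Real.exp_add]; congr 1; ring
  have h2 : Real.exp (-(B*ε)) * Real.exp (B*x) = Real.exp (B*(x-ε)) := by
    rw [← Real.exp_add]; congr 1; ring
  have h3 : Real.exp (-(B*ε)) * Real.exp (-(B*x)) = Real.exp (-B*(x+ε)) := by
    rw [← Real.exp_add]; congr 1; ring
  linear_combination h1 - h2 - h3

lemma clnDen_pos (B ε x : ℝ) :
    0 < 1 + Real.exp (-(2*B*ε)) + 2 * Real.exp (-(B*ε)) * Real.cosh (B*x) := by
  have := Real.exp_pos (-(2*B*ε))
  have := Real.exp_pos (-(B*ε))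
  have := Real.cosh_pos (x := B*x)
  nlinarith

lemma clnEq_pos (B ε x : ℝ) : 0 < clnEq B ε x := by
  rw [clnEq_eq]; exact one_div_pos.mpr (clnDen_pos B ε x)

lemma clnEq_le_one (B ε x : ℝ) : clnEq B ε x ≤ 1 := by
  rw [clnEq_eq]
  rw [div_le_one (clnDen_pos B ε x)]
  have := Real.exp_pos (-(2*B*ε))
  have := Real.exp_pos (-(B*ε))
  have := Real.cosh_pos (x := B*x)
  nlinarith

lemma clnEq_anti {B : ℝ} (hB : 0 < B) (ε : ℝ) {x y : ℝ} (h : |y| ≤ |x|) :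
    clnEq B ε x ≤ clnEq B ε y := by
  rw [clnEq_eq, clnEq_eq]
  apply one_div_le_one_div_of_le (clnDen_pos B ε y)
  have hc : Real.cosh (B*y) ≤ Real.cosh (B*x) := by
    rw [Real.cosh_le_cosh, abs_mul, abs_mul]
    exact mul_le_mul_of_nonneg_left h (abs_nonneg B)
  have := Real.exp_pos (-(B*ε))
  nlinarith

lemma clnEq_strict_anti {B : ℝ} (hB : 0 < B) (ε : ℝ) {x y : ℝ} (h : |y| < |x|) :
    clnEq B ε x < clnEq B ε y := by
  rw [clnEq_eq, clnEq_eq]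
  apply one_div_lt_one_div_of_lt (clnDen_pos B ε y)
  have hc : Real.cosh (B*y) < Real.cosh (B*x) := by
    rw [Real.cosh_lt_cosh, abs_mul, abs_mul]
    exact mul_lt_mul_of_pos_left h (abs_pos.mpr hB.ne')
  have := Real.exp_pos (-(B*ε))
  nlinarith

/-- The CLN training loss for a conjunction of `n` linear equalities over `m`
data points, with loss function `Loss` applied to the model output. -/
noncomputable def clnLoss (B ε : ℝ) {n m : ℕ} (l : Fin n → ℕ)
    (t : (i : Fin n) → Fin (l i) → Fin m → ℝ) (Loss : ℝ → ℝ)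
    (W : (i : Fin n) → Fin (l i) → ℝ) : ℝ :=
  ∑ k : Fin m, Loss (∏ i : Fin n, clnEq B ε (∑ j : Fin (l i), W i j * t i j k))

theorem stmt_10 (B ε : ℝ) (hB : 0 < B) (hε : 0 < ε)
    (n m : ℕ) (hn : 1 ≤ n) (hm : 1 ≤ m)
    (l : Fin n → ℕ) (hl : ∀ i, 1 ≤ l i)
    (t : (i : Fin n) → Fin (l i) → Fin m → ℝ)
    (Loss : ℝ → ℝ) (hLoss : StrictAntiOn Loss (Set.Icc (0:ℝ) 1))
    (Wstar : (i : Fin n) → Fin (l i) → ℝ)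
    (hlocal : ∃ δ > (0:ℝ), ∀ W : (i : Fin n) → Fin (l i) → ℝ,
      ‖W - Wstar‖ ≤ δ → clnLoss B ε l t Loss Wstar ≤ clnLoss B ε l t Loss W) :
    (∀ (i : Fin n) (k : Fin m), (∑ j : Fin (l i), Wstar i j * t i j k) = 0) ∧
    (∀ W : (i : Fin n) → Fin (l i) → ℝ,
      clnLoss B ε l t Loss Wstar ≤ clnLoss B ε l t Loss W) := by
  classical
  obtain ⟨δ, hδ, hloc⟩ := hlocal
  have hmem : ∀ (W : (i : Fin n) → Fin (l i) → ℝ) (k : Fin m),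
      (∏ i : Fin n, clnEq B ε (∑ j : Fin (l i), W i j * t i j k)) ∈ Set.Icc (0:ℝ) 1 := by
    intro W k
    constructor
    · exact Finset.prod_nonneg fun i _ => (clnEq_pos B ε _).le
    · exact Finset.prod_le_one (fun i _ => (clnEq_pos B ε _).le)
        (fun i _ => clnEq_le_one B ε _)
  have key : ∀ (i : Fin n) (k : Fin m), (∑ j : Fin (l i), Wstar i j * t i j k) = 0 := by
    by_contra hcon
    push_neg at hcon
    obtain ⟨i0, k0, hne⟩ := hcon
    have hW0 : Wstar ≠ 0 := by
      intro h
      exact hne (by simp [h])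
    have hnorm : (0:ℝ) < ‖Wstar‖ := norm_pos_iff.mpr hW0
    set s : ℝ := max 0 (1 - δ / ‖Wstar‖) with hs
    have hs0 : 0 ≤ s := le_max_left _ _
    have hs1 : s < 1 := by
      apply max_lt one_pos
      have : 0 < δ / ‖Wstar‖ := div_pos hδ hnorm
      linarith
    have hdist : ‖s • Wstar - Wstar‖ ≤ δ := by
      have h1 : s • Wstar - Wstar = (s - 1) • Wstar := by rw [sub_smul, one_smul]
      rw [h1, norm_smul]
      have h2 : ‖s - 1‖ = 1 - s := by
        rw [Real.norm_eq_abs, abs_of_nonpos (by linarith)]; ring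
      rw [h2]
      have h3 : 1 - s ≤ δ / ‖Wstar‖ := by
        have := le_max_right (0:ℝ) (1 - δ / ‖Wstar‖)
        linarith
      calc (1 - s) * ‖Wstar‖ ≤ (δ / ‖Wstar‖) * ‖Wstar‖ := by nlinarith
        _ = δ := div_mul_cancel₀ δ hnorm.ne'
    have husmul : ∀ (i : Fin n) (k : Fin m),
        (∑ j : Fin (l i), (s • Wstar) i j * t i j k)
          = s * ∑ j : Fin (l i), Wstar i j * t i j k := by
      intro i k
      rw [Finset.mul_sum]
      refine Finset.sum_congr rfl fun j _ => ?_
      simp [mul_assoc]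
    have habs_le : ∀ (x : ℝ), |s * x| ≤ |x| := by
      intro x
      rw [abs_mul, abs_of_nonneg hs0]
      nlinarith [abs_nonneg x]
    have hfle : ∀ (i : Fin n) (k : Fin m),
        clnEq B ε (∑ j : Fin (l i), Wstar i j * t i j k)
          ≤ clnEq B ε (∑ j : Fin (l i), (s • Wstar) i j * t i j k) := by
      intro i k
      rw [husmul]
      exact clnEq_anti hB ε (habs_le _)
    have hlt : clnLoss B ε l t Loss (s • Wstar) < clnLoss B ε l t Loss Wstar := by
      simp only [clnLoss]
      apply Finset.sum_lt_sum
      · intro k _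
        have hple : (∏ i : Fin n, clnEq B ε (∑ j : Fin (l i), Wstar i j * t i j k))
            ≤ ∏ i : Fin n, clnEq B ε (∑ j : Fin (l i), (s • Wstar) i j * t i j k) :=
          Finset.prod_le_prod (fun i _ => (clnEq_pos B ε _).le) (fun i _ => hfle i k)
        exact hLoss.antitoneOn (hmem Wstar k) (hmem (s • Wstar) k) hple
      · refine ⟨k0, Finset.mem_univ k0, ?_⟩
        have hplt : (∏ i : Fin n, clnEq B ε (∑ j : Fin (l i), Wstar i j * t i j k0))
            < ∏ i : Fin n, clnEq B ε (∑ j : Fin (l i), (s • Wstar) i j * t i j k0) := by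
          apply Finset.prod_lt_prod (fun i _ => clnEq_pos B ε _) (fun i _ => hfle i k0)
          refine ⟨i0, Finset.mem_univ i0, ?_⟩
          rw [husmul]
          apply clnEq_strict_anti hB ε
          rw [abs_mul, abs_of_nonneg hs0]
          have : 0 < |∑ j : Fin (l i0), Wstar i0 j * t i0 j k0| := abs_pos.mpr hne
          nlinarith
        exact hLoss (hmem Wstar k0) (hmem (s • Wstar) k0) hplt
    exact absurd (hloc _ hdist) (not_le.mpr hlt)
  refine ⟨key, ?_⟩
  intro W
  simp only [clnLoss]
  apply Finset.sum_le_sum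
  intro k _
  have h1 : (∏ i : Fin n, clnEq B ε (∑ j : Fin (l i), W i j * t i j k))
      ≤ ∏ i : Fin n, clnEq B ε (∑ j : Fin (l i), Wstar i j * t i j k) := by
    apply Finset.prod_le_prod (fun i _ => (clnEq_pos B ε _).le)
    intro i _
    rw [key i k]
    apply clnEq_anti hB ε
    simp [abs_nonneg]
  exact hLoss.antitoneOn (hmem W k) (hmem Wstar k) h1
end

section
/- Fix B > 0 and ε > 0 and let f(x) = (1/(1 + e^{−B(x+ε)}))·(1/(1 + e^{B(x−ε)})). Then f is strictly decreasing on [0, ∞): for all x, y with 0 ≤ x < y, f(y) < f(x). -/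
theorem stmt_12 (B ε : ℝ) (hB : 0 < B) (hε : 0 < ε)
    (f : ℝ → ℝ)
    (hf : ∀ x, f x = (1 / (1 + Real.exp (-B * (x + ε)))) * (1 / (1 + Real.exp (B * (x - ε))))) :
    ∀ x y : ℝ, 0 ≤ x → x < y → f y < f x := by
  intro x y hx hxy
  rw [hf x, hf y]
  set a := Real.exp (B * x) with ha
  set b := Real.exp (B * y) with hb
  set c := Real.exp (B * ε) with hc
  have ha1 : 1 ≤ a := Real.one_le_exp (mul_nonneg hB.le hx)
  have hab : a < b := Real.exp_lt_exp.2 (by nlinarith)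
  have hcp : 0 < c := Real.exp_pos _
  have hap : 0 < a := lt_of_lt_of_le one_pos ha1
  have hbp : 0 < b := hap.trans hab
  have e1 : Real.exp (-B * (x + ε)) = (a * c)⁻¹ := by
    rw [ha, hc, ← Real.exp_add, ← Real.exp_neg]; ring_nf
  have e2 : Real.exp (B * (x - ε)) = a * c⁻¹ := by
    rw [ha, hc, ← Real.exp_neg, ← Real.exp_add]; ring_nf
  have e3 : Real.exp (-B * (y + ε)) = (b * c)⁻¹ := by
    rw [hb, hc, ← Real.exp_add, ← Real.exp_neg]; ring_nf
  have e4 : Real.exp (B * (y - ε)) = b * c⁻¹ := by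
    rw [hb, hc, ← Real.exp_neg, ← Real.exp_add]; ring_nf
  rw [e1, e2, e3, e4, div_mul_div_comm, div_mul_div_comm]
  clear_value a b c
  have hDx : 0 < (1 + (a * c)⁻¹) * (1 + a * c⁻¹) := by positivity
  have hDy : (1 + (a * c)⁻¹) * (1 + a * c⁻¹) < (1 + (b * c)⁻¹) * (1 + b * c⁻¹) := by
    simp only [mul_inv]
    have h1 : b⁻¹ < a⁻¹ := by
      rw [inv_lt_inv₀ hbp hap]; exact hab
    have hc' : 0 < c⁻¹ := by positivity
    have ex : ∀ t : ℝ, 0 < t →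
        (1 + t⁻¹ * c⁻¹) * (1 + t * c⁻¹) = 1 + t * c⁻¹ + t⁻¹ * c⁻¹ + c⁻¹ * c⁻¹ := by
      intro t ht
      field_simp
      ring
    rw [ex a hap, ex b hbp]
    have hab1 : 1 < a * b := by nlinarith
    have h2 : b⁻¹ - a⁻¹ = (a - b) / (a * b) := by
      rw [inv_eq_one_div, inv_eq_one_div, div_sub_div _ _ hbp.ne' hap.ne']
      rw [div_eq_div_iff (by positivity) (by positivity)]
      ring
    have hd : a - b < (a - b) / (a * b) := by
      rw [lt_div_iff₀ (by positivity)]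
      nlinarith
    have key : 0 < (b - a) + (b⁻¹ - a⁻¹) := by
      rw [h2]; linarith
    nlinarith [mul_pos key hc']
  have := one_div_lt_one_div_of_lt hDx hDy
  linarith [this]
end
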